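/- (Proposition 1, Types III and IV.) Let γ₁, γ₂ ∈ ℂ with γ₂ ≠ 0 and let n be a positive integer. (III) With u_III := −(1/2)(n − 1 + iγ₁/(2γ₂)) and E_III := −γ₁²/(4γ₂) − γ₂(n+1)², one has Φ(B, E_III, u_III) = B(B − n − 1)(iγ₁ − 2γ₂(B + 1))(iγ₁ − 2γ₂(B − n)) for all B ∈ ℂ; in particular Φ(0, E_III, u_III) = 0 and Φ(n+1, E_III, u_III) = 0. (IV) With u_IV := −(1/2)(n + 1 − iγ₁/(2γ₂)) and E_IV := −γ₁²/(4γ₂) − γ₂(n+1)², one has Φ(B, E_IV, u_IV) = B(B − n − 1)(iγ₁ + 2γ₂(B − 1))(iγ₁ + 2γ₂(B − n − 2)) for all B ∈ ℂ; in particular Φ(0, E_IV, u_IV) = 0 and Φ(n+1, E_IV, u_IV) = 0. -/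

import Mathlib

noncomputable section
open Complex

/-- `Φ₁(B,E,u) = (1/4)(E − 2iγ₁(B+u) + 4γ₂(B+u)²)`. -/
def Phi1 (γ₁ γ₂ B E u : ℂ) : ℂ :=
  (1/4) * (E - 2*I*γ₁*(B + u) + 4*γ₂*(B + u)^2)

/-- `Φ₂(B,E,u) = E + 2iγ₁(B+u−1) + 4γ₂(B+u−1)²`. -/
def Phi2 (γ₁ γ₂ B E u : ℂ) : ℂ :=
  E + 2*I*γ₁*(B + u - 1) + 4*γ₂*(B + u - 1)^2

/-- `Φ = Φ₁·Φ₂`, the structure function of the quadratic quantum Zernike system. -/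
def Phi (γ₁ γ₂ B E u : ℂ) : ℂ := Phi1 γ₁ γ₂ B E u * Phi2 γ₁ γ₂ B E u

/- With `a := iγ₁/(2γ₂)` and `E = γ₂(a² − c²)`, completing the square factors `Φ₁` and `Φ₂` into
linear factors in `B + u`. The type III value of `u` puts the roots `B = 0, n + 1` into `Φ₂`, the
type IV value puts them into `Φ₁`; the other two factors become the stated ones after `2γ₂a = iγ₁`. -/

section Factorization

variable {γ₁ γ₂ a : ℂ}

theorem Phi1_eq_mul (ha : I * γ₁ = 2 * γ₂ * a) (B u c : ℂ) :
    Phi1 γ₁ γ₂ B (γ₂ * (a ^ 2 - c ^ 2)) u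
      = γ₂ * (B + u - (a + c) / 2) * (B + u - (a - c) / 2) := by
  unfold Phi1
  linear_combination (-(B + u) / 2) * ha

theorem Phi2_eq_mul (ha : I * γ₁ = 2 * γ₂ * a) (B u c : ℂ) :
    Phi2 γ₁ γ₂ B (γ₂ * (a ^ 2 - c ^ 2)) u
      = 4 * γ₂ * (B + u - 1 + (a - c) / 2) * (B + u - 1 + (a + c) / 2) := by
  unfold Phi2
  linear_combination 2 * (B + u - 1) * ha

variable {E : ℂ} (m : ℂ)

theorem Phi_typeIII_eq (ha : I * γ₁ = 2 * γ₂ * a) (hE : E = γ₂ * (a ^ 2 - (m + 1) ^ 2)) (B : ℂ) :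
    Phi γ₁ γ₂ B E (-(1/2) * (m - 1 + a))
      = B * (B - m - 1) * (I*γ₁ - 2*γ₂*(B + 1)) * (I*γ₁ - 2*γ₂*(B - m)) := by
  rw [hE, Phi, Phi1_eq_mul ha, Phi2_eq_mul ha, ha]
  ring

theorem Phi_typeIV_eq (ha : I * γ₁ = 2 * γ₂ * a) (hE : E = γ₂ * (a ^ 2 - (m + 1) ^ 2)) (B : ℂ) :
    Phi γ₁ γ₂ B E (-(1/2) * (m + 1 - a))
      = B * (B - m - 1) * (I*γ₁ + 2*γ₂*(B - 1)) * (I*γ₁ + 2*γ₂*(B - m - 2)) := by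
  rw [hE, Phi, Phi1_eq_mul ha, Phi2_eq_mul ha, ha]
  ring

end Factorization

theorem prop1_types_III_IV_general (γ₁ γ₂ : ℂ) (hγ₂ : γ₂ ≠ 0) (n : ℕ) :
    (∀ B : ℂ, Phi γ₁ γ₂ B (-γ₁^2/(4*γ₂) - γ₂*((n : ℂ) + 1)^2)
          (-(1/2) * ((n : ℂ) - 1 + I*γ₁/(2*γ₂)))
        = B * (B - (n : ℂ) - 1) * (I*γ₁ - 2*γ₂*(B + 1)) * (I*γ₁ - 2*γ₂*(B - (n : ℂ)))) ∧
    Phi γ₁ γ₂ 0 (-γ₁^2/(4*γ₂) - γ₂*((n : ℂ) + 1)^2)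
        (-(1/2) * ((n : ℂ) - 1 + I*γ₁/(2*γ₂))) = 0 ∧
    Phi γ₁ γ₂ ((n : ℂ) + 1) (-γ₁^2/(4*γ₂) - γ₂*((n : ℂ) + 1)^2)
        (-(1/2) * ((n : ℂ) - 1 + I*γ₁/(2*γ₂))) = 0 ∧
    (∀ B : ℂ, Phi γ₁ γ₂ B (-γ₁^2/(4*γ₂) - γ₂*((n : ℂ) + 1)^2)
          (-(1/2) * ((n : ℂ) + 1 - I*γ₁/(2*γ₂)))
        = B * (B - (n : ℂ) - 1) * (I*γ₁ + 2*γ₂*(B - 1)) * (I*γ₁ + 2*γ₂*(B - (n : ℂ) - 2))) ∧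
    Phi γ₁ γ₂ 0 (-γ₁^2/(4*γ₂) - γ₂*((n : ℂ) + 1)^2)
        (-(1/2) * ((n : ℂ) + 1 - I*γ₁/(2*γ₂))) = 0 ∧
    Phi γ₁ γ₂ ((n : ℂ) + 1) (-γ₁^2/(4*γ₂) - γ₂*((n : ℂ) + 1)^2)
        (-(1/2) * ((n : ℂ) + 1 - I*γ₁/(2*γ₂))) = 0 := by
  have ha : I * γ₁ = 2 * γ₂ * (I * γ₁ / (2 * γ₂)) := by field_simp
  have hE : -γ₁^2/(4*γ₂) - γ₂*((n : ℂ) + 1)^2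
      = γ₂ * ((I * γ₁ / (2 * γ₂)) ^ 2 - ((n : ℂ) + 1) ^ 2) := by
    field_simp
    linear_combination (-4 * γ₁ ^ 2) * I_sq
  have hIII := Phi_typeIII_eq (n : ℂ) ha hE
  have hIV := Phi_typeIV_eq (n : ℂ) ha hE
  exact ⟨hIII, by rw [hIII]; ring, by rw [hIII]; ring, hIV, by rw [hIV]; ring, by rw [hIV]; ring⟩

/-- Proposition 1, Types III and IV. -/
theorem prop1_types_III_IV (γ₁ γ₂ : ℂ) (hγ₂ : γ₂ ≠ 0) (n : ℕ) (hn : 1 ≤ n) :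
    (∀ B : ℂ, Phi γ₁ γ₂ B (-γ₁^2/(4*γ₂) - γ₂*((n : ℂ) + 1)^2)
          (-(1/2) * ((n : ℂ) - 1 + I*γ₁/(2*γ₂)))
        = B * (B - (n : ℂ) - 1) * (I*γ₁ - 2*γ₂*(B + 1)) * (I*γ₁ - 2*γ₂*(B - (n : ℂ)))) ∧
    Phi γ₁ γ₂ 0 (-γ₁^2/(4*γ₂) - γ₂*((n : ℂ) + 1)^2)
        (-(1/2) * ((n : ℂ) - 1 + I*γ₁/(2*γ₂))) = 0 ∧
    Phi γ₁ γ₂ ((n : ℂ) + 1) (-γ₁^2/(4*γ₂) - γ₂*((n : ℂ) + 1)^2)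
        (-(1/2) * ((n : ℂ) - 1 + I*γ₁/(2*γ₂))) = 0 ∧
    (∀ B : ℂ, Phi γ₁ γ₂ B (-γ₁^2/(4*γ₂) - γ₂*((n : ℂ) + 1)^2)
          (-(1/2) * ((n : ℂ) + 1 - I*γ₁/(2*γ₂)))
        = B * (B - (n : ℂ) - 1) * (I*γ₁ + 2*γ₂*(B - 1)) * (I*γ₁ + 2*γ₂*(B - (n : ℂ) - 2))) ∧
    Phi γ₁ γ₂ 0 (-γ₁^2/(4*γ₂) - γ₂*((n : ℂ) + 1)^2)
        (-(1/2) * ((n : ℂ) + 1 - I*γ₁/(2*γ₂))) = 0 ∧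
    Phi γ₁ γ₂ ((n : ℂ) + 1) (-γ₁^2/(4*γ₂) - γ₂*((n : ℂ) + 1)^2)
        (-(1/2) * ((n : ℂ) + 1 - I*γ₁/(2*γ₂))) = 0 :=
  prop1_types_III_IV_general γ₁ γ₂ hγ₂ n
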